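/- arXiv:1905.10516 — 7 statements merged into one kernel-verified Lean document; each statement's English description precedes it below -/
import Mathlib

section
/- Let B be a smooth convex body in ℝ^d and let u_1,…,u_M be unit vectors. Then the set of boundary points of B illuminated by at least one of the directions u_1,…,u_M equals the set of boundary points of B illuminated by at least one nonzero vector from the nonnegative cone {a_1 u_1 + … + a_M u_M : a_1,…,a_M ≥ 0}. -/
open Set MeasureTheory Pointwise RealInnerProductSpace

/-- A convex body: a compact convex set with nonempty interior. -/
def IsConvexBody {E : Type*} [NormedAddCommGroup E] [NormedSpace ℝ E] (B : Set E) : Prop :=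
  Convex ℝ B ∧ IsCompact B ∧ (interior B).Nonempty

/-- A boundary point `x` of `B` is illuminated by direction `v` if moving from `x`
in direction `v` enters the interior of `B`. -/
def Illuminates {E : Type*} [NormedAddCommGroup E] [NormedSpace ℝ E]
    (B : Set E) (v x : E) : Prop :=
  ∃ t : ℝ, 0 < t ∧ x + t • v ∈ interior B

/-- A convex body is smooth if through every boundary point there is a unique supporting
hyperplane, i.e. a unique unit interior normal vector. -/
def IsSmoothBody {E : Type*} [NormedAddCommGroup E] [InnerProductSpace ℝ E]
    (B : Set E) : Prop :=
  ∀ x ∈ frontier B, ∃! n : E, ‖n‖ = 1 ∧ ∀ y ∈ B, ⟪n, x⟫ ≤ ⟪n, y⟫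

/-!
At a boundary point `x` of a smooth convex body with unit inner normal `n`, a vector `v`
illuminates `x` iff `⟪n, v⟫ > 0`: if the ray `x + t v` missed the interior, a hyperplane
separating the two would support the body at `x`, hence by smoothness be the tangent hyperplane,
forcing `⟪n, v⟫ ≤ 0`. Illumination by `∑ aᵢ uᵢ` with `aᵢ ≥ 0` thus means
`∑ aᵢ ⟪n, uᵢ⟫ > 0`, so some `⟪n, uᵢ⟫ > 0`.
-/

lemma Illuminates.ne_zero {E : Type*} [NormedAddCommGroup E] [NormedSpace ℝ E] {B : Set E}
    {v x : E} (hv : Illuminates B v x) (hx : x ∉ interior B) : v ≠ 0 := by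
  rintro rfl
  obtain ⟨t, -, ht⟩ := hv
  exact hx (by simpa using ht)

section

variable {E : Type*} [NormedAddCommGroup E] [InnerProductSpace ℝ E] {B : Set E} {n x v : E}

lemma inner_lt_inner_of_mem_interior (hn : n ≠ 0) (hsupp : ∀ z ∈ B, ⟪n, x⟫ ≤ ⟪n, z⟫) {y : E}
    (hy : y ∈ interior B) : ⟪n, x⟫ < ⟪n, y⟫ := by
  have hopen : IsOpenMap (innerSL ℝ n) :=
    (innerSL ℝ n).isOpenMap_of_ne_zero fun h => hn (by simpa using congrArg norm h)
  have himage : innerSL ℝ n '' interior B ⊆ interior (Ici ⟪n, x⟫) :=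
    interior_maximal (image_subset_iff.2 fun z hz => hsupp z (interior_subset hz))
      (hopen _ isOpen_interior)
  rw [interior_Ici] at himage
  exact himage ⟨y, hy, rfl⟩

lemma Illuminates.inner_pos (hv : Illuminates B v x) (hn : n ≠ 0)
    (hsupp : ∀ z ∈ B, ⟪n, x⟫ ≤ ⟪n, z⟫) : 0 < ⟪n, v⟫ := by
  obtain ⟨t, ht, hmem⟩ := hv
  have := inner_lt_inner_of_mem_interior hn hsupp hmem
  rw [inner_add_right, real_inner_smul_right] at this
  exact pos_of_mul_pos_right (by linarith) ht.le

lemma StrongDual.exists_norm_eq_one_inner_eq_mul [CompleteSpace E] {f : StrongDual ℝ E}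
    (hf : f ≠ 0) : ∃ m : E, ‖m‖ = 1 ∧ ∃ c > 0, ∀ y, ⟪m, y⟫ = c * f y := by
  have hfpos : 0 < ‖f‖ := norm_pos_iff.2 hf
  refine ⟨‖f‖⁻¹ • (InnerProductSpace.toDual ℝ E).symm f, ?_, ‖f‖⁻¹, inv_pos.2 hfpos, fun y => ?_⟩
  · rw [norm_smul, LinearIsometryEquiv.norm_map, norm_inv, norm_norm, inv_mul_cancel₀ hfpos.ne']
  · rw [real_inner_smul_left, InnerProductSpace.toDual_symm_apply]

lemma exists_supporting_normal_inner_nonpos_of_not_illuminates [CompleteSpace E]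
    (hconv : Convex ℝ B) (hint : (interior B).Nonempty) (hxB : x ∈ closure B)
    (hx : x ∉ interior B) (hv : ¬ Illuminates B v x) :
    ∃ m : E, ‖m‖ = 1 ∧ (∀ y ∈ B, ⟪m, x⟫ ≤ ⟪m, y⟫) ∧ ⟪m, v⟫ ≤ 0 := by
  have hray : ∀ t : ℝ, AffineMap.lineMap x (x + v) t = x + t • v := fun t => by
    simp [AffineMap.lineMap_apply_module', add_comm]
  have hdisj : Disjoint (interior B) (AffineMap.lineMap x (x + v) '' Ici (0 : ℝ)) := by
    refine disjoint_right.2 ?_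
    rintro _ ⟨t, ht, rfl⟩ hmem
    rw [hray] at hmem
    rcases (mem_Ici.1 ht).eq_or_lt with rfl | ht
    · exact hx (by simpa using hmem)
    · exact hv ⟨t, ht, hmem⟩
  obtain ⟨f, c, hf, hfB, hfray⟩ := geometric_hahn_banach_of_nonempty_interior hconv
    ((convex_Ici 0).affine_image _) hdisj hint ⟨x, 0, self_mem_Ici, by simp [hray]⟩
  have hfx : f x = c := by
    refine le_antisymm ?_ (hfray x ⟨0, self_mem_Ici, by simp [hray]⟩)
    exact closure_minimal hfB (isClosed_le f.continuous continuous_const) hxB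
  have hfv : 0 ≤ f v := by
    have := hfray _ ⟨1, mem_Ici.2 zero_le_one, hray 1⟩
    rw [one_smul, map_add, hfx] at this
    linarith
  obtain ⟨m, hm, k, hk, hmf⟩ := StrongDual.exists_norm_eq_one_inner_eq_mul (neg_ne_zero.2 hf)
  refine ⟨m, hm, fun y hy => ?_, ?_⟩
  · simp only [hmf, neg_apply]
    nlinarith [hfB y hy]
  · simp only [hmf, neg_apply]
    nlinarith

lemma IsSmoothBody.illuminates_iff_inner_pos [CompleteSpace E] (hsm : IsSmoothBody B)
    (hconv : Convex ℝ B) (hint : (interior B).Nonempty) (hx : x ∈ frontier B)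
    (hn : ‖n‖ = 1 ∧ ∀ y ∈ B, ⟪n, x⟫ ≤ ⟪n, y⟫) : Illuminates B v x ↔ 0 < ⟪n, v⟫ := by
  refine ⟨fun hv => hv.inner_pos (norm_ne_zero_iff.1 (hn.1.trans_ne one_ne_zero)) hn.2,
    fun hpos => ?_⟩
  by_contra hv
  obtain ⟨m, hm, hmsupp, hmv⟩ := exists_supporting_normal_inner_nonpos_of_not_illuminates
    hconv hint (frontier_subset_closure hx) hx.2 hv
  have hmn : m = n := (hsm x hx).unique ⟨hm, hmsupp⟩ hn
  exact (hmn ▸ hmv).not_gt hpos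

end

theorem illuminated_cone_eq_general (d : ℕ) (B : Set (EuclideanSpace ℝ (Fin d)))
    (hB : IsConvexBody B) (hsm : IsSmoothBody B)
    (M : ℕ) (u : Fin M → EuclideanSpace ℝ (Fin d)) :
    {x ∈ frontier B | ∃ i, Illuminates B (u i) x} =
      {x ∈ frontier B | ∃ v : EuclideanSpace ℝ (Fin d), v ≠ 0 ∧
        (∃ a : Fin M → ℝ, (∀ i, 0 ≤ a i) ∧ v = ∑ i, a i • u i) ∧ Illuminates B v x} := by
  ext x
  constructor
  · rintro ⟨hx, i, hi⟩
    refine ⟨hx, u i, hi.ne_zero hx.2, ⟨Pi.single i 1, fun j => ?_, ?_⟩, hi⟩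
    · by_cases hj : j = i <;> simp [hj]
    · simp [Pi.single_apply]
  · rintro ⟨hx, v, -, ⟨a, ha, rfl⟩, hv⟩
    obtain ⟨n, hn, -⟩ := hsm x hx
    have hiff := fun w => hsm.illuminates_iff_inner_pos (v := w) hB.1 hB.2.2 hx hn
    rw [hiff, inner_sum] at hv
    simp only [real_inner_smul_right] at hv
    obtain ⟨i, -, hi⟩ := Finset.exists_lt_of_sum_lt (f := fun _ => (0 : ℝ)) (by simpa using hv)
    exact ⟨hx, i, (hiff _).2 (pos_of_mul_pos_right hi (ha i))⟩

/-- For a smooth convex body `B` and unit vectors `u₁, …, u_M`, the set of boundary points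
illuminated by one of the `uᵢ` equals the set of boundary points illuminated by some nonzero
vector of the nonnegative cone `{a₁ u₁ + ⋯ + a_M u_M : aᵢ ≥ 0}`. -/
theorem illuminated_cone_eq (d : ℕ) (B : Set (EuclideanSpace ℝ (Fin d)))
    (hB : IsConvexBody B) (hsm : IsSmoothBody B)
    (M : ℕ) (u : Fin M → EuclideanSpace ℝ (Fin d)) (hu : ∀ i, ‖u i‖ = 1) :
    {x ∈ frontier B | ∃ i, Illuminates B (u i) x} =
      {x ∈ frontier B | ∃ v : EuclideanSpace ℝ (Fin d), v ≠ 0 ∧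
        (∃ a : Fin M → ℝ, (∀ i, 0 ≤ a i) ∧ v = ∑ i, a i • u i) ∧ Illuminates B v x} :=
  illuminated_cone_eq_general d B hB hsm M u
end

section
/- Let B be a convex body in ℝ^d with 0 ∈ int B, let v ∈ ℝ^d, and let δ_1, δ_2, Δ_1 ∈ (0,1) with Δ_1 < δ_1. Set Δ_2 = Δ_1 δ_2 / δ_1. Then the intersection of the open homothet −δ_1 v + (1 − δ_2) • int B with B is contained in −Δ_1 v + (1 − Δ_2) • int B. -/
/-!
Write a point of `(v +ᵥ (1 - δ) • int B) ∩ B` as `x = v + (1 - δ) b` with `b ∈ int B`. For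
`0 < t ≤ 1`, `x - t v = (1 - t) x + t (1 - δ) b`, and dividing by `1 - t δ` turns the right-hand
side into a convex combination of `x ∈ B` and `b ∈ int B` with positive weight on `b`, which
therefore lies in `int B`. The theorem is the case `t = Δ₁ / δ₁` applied to the vector `-δ₁ v`.
-/

open Set MeasureTheory Pointwise

theorem Convex.vadd_smul_interior_inter_subset {𝕜 E : Type*} [Field 𝕜] [LinearOrder 𝕜]
    [IsStrictOrderedRing 𝕜] [AddCommGroup E] [Module 𝕜 E] [TopologicalSpace E]
    [IsTopologicalAddGroup E] [ContinuousConstSMul 𝕜 E] {s : Set E} (hs : Convex 𝕜 s) (v : E)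
    {δ t : 𝕜} (hδ : δ < 1) (ht₀ : 0 < t) (ht₁ : t ≤ 1) :
    (v +ᵥ (1 - δ) • interior s) ∩ s ⊆ t • v +ᵥ (1 - t * δ) • interior s := by
  rintro _ ⟨⟨_, ⟨b, hb, rfl⟩, rfl⟩, hx⟩
  have htδ : 0 < 1 - t * δ := by nlinarith
  refine ⟨(1 - t * δ) • ((t * (1 - δ) / (1 - t * δ)) • b +
      ((1 - t) / (1 - t * δ)) • (v +ᵥ (1 - δ) • b)), smul_mem_smul_set ?_, ?_⟩
  · refine hs.combo_interior_self_mem_interior hb hx (by positivity)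
      (div_nonneg (by linarith) htδ.le) ?_
    field_simp
    ring
  · simp only [vadd_eq_add, smul_add, smul_smul]
    match_scalars <;> field_simp <;> ring

theorem homothet_inter_subset_general (d : ℕ) (B : Set (EuclideanSpace ℝ (Fin d)))
    (hB : IsConvexBody B)
    (v : EuclideanSpace ℝ (Fin d))
    (δ1 δ2 Δ1 : ℝ) (hδ1 : δ1 ∈ Set.Ioo (0 : ℝ) 1) (hδ2 : δ2 ∈ Set.Ioo (0 : ℝ) 1)
    (hΔ1 : Δ1 ∈ Set.Ioo (0 : ℝ) 1) (hlt : Δ1 < δ1) :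
    (((-δ1) • v +ᵥ (1 - δ2) • interior B) ∩ B) ⊆
      (-Δ1) • v +ᵥ (1 - Δ1 * δ2 / δ1) • interior B := by
  have hshrink := hB.1.vadd_smul_interior_inter_subset ((-δ1) • v) hδ2.2
    (div_pos hΔ1.1 hδ1.1) ((div_le_one hδ1.1).2 hlt.le)
  have hscale : Δ1 / δ1 * -δ1 = -Δ1 := by field_simp [hδ1.1.ne']
  rwa [smul_smul, hscale, div_mul_eq_mul_div] at hshrink

/-- For a convex body `B` with `0 ∈ int B`, `δ₁, δ₂, Δ₁ ∈ (0,1)` with `Δ₁ < δ₁` and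
`Δ₂ = Δ₁ δ₂ / δ₁`, the intersection of `-δ₁ v + (1 - δ₂) • int B` with `B` is contained
in `-Δ₁ v + (1 - Δ₂) • int B`. -/
theorem homothet_inter_subset (d : ℕ) (B : Set (EuclideanSpace ℝ (Fin d)))
    (hB : IsConvexBody B) (h0 : 0 ∈ interior B)
    (v : EuclideanSpace ℝ (Fin d))
    (δ1 δ2 Δ1 : ℝ) (hδ1 : δ1 ∈ Set.Ioo (0 : ℝ) 1) (hδ2 : δ2 ∈ Set.Ioo (0 : ℝ) 1)
    (hΔ1 : Δ1 ∈ Set.Ioo (0 : ℝ) 1) (hlt : Δ1 < δ1) :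
    (((-δ1) • v +ᵥ (1 - δ2) • interior B) ∩ B) ⊆
      (-Δ1) • v +ᵥ (1 - Δ1 * δ2 / δ1) • interior B :=
  homothet_inter_subset_general d B hB v δ1 δ2 Δ1 hδ1 hδ2 hΔ1 hlt
end

section
/- Let P be a convex body in ℝ^d, let Q be a convex body in ℝ^m, and let α be a real number with 0 ≤ α ≤ d. Then g_{α+m}(P × Q) ≥ g_α(P), where P × Q is the (d+m)-dimensional convex body given by the Cartesian product. -/
open Set MeasureTheory Pointwise

/-- `gCov α B` is the infimum of `∑ λᵢ^α` over all finite translative coverings of `B`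
by homothets `xᵢ + λᵢ • B` with `λᵢ ∈ (0,1)`. -/
noncomputable def gCov {E : Type*} [NormedAddCommGroup E] [NormedSpace ℝ E]
    (α : ℝ) (B : Set E) : ℝ :=
  sInf {s : ℝ | ∃ (k : ℕ) (lam : Fin k → ℝ) (x : Fin k → E),
    (∀ i, lam i ∈ Set.Ioo (0 : ℝ) 1) ∧
    B ⊆ (⋃ i, x i +ᵥ lam i • B) ∧
    s = ∑ i, lam i ^ α}

/-!
Slice a covering of `P × Q` by homothets `xᵢ + λᵢ • (P × Q)` at a height `y ∈ Q`: the homothets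
whose `Q`-factor `Sᵢ = (xᵢ).2 + λᵢ • Q` contains `y` cover `P`, so
`g_α(P) ≤ ∑_{i : y ∈ Sᵢ} λᵢ ^ α`. Integrating this over `y ∈ Q` and using
`vol Sᵢ = λᵢ ^ m · vol Q` gives `g_α(P) · vol Q ≤ (∑ᵢ λᵢ ^ (α + m)) · vol Q`.
-/

open scoped ENNReal
open Module

lemma Set.vadd_prod_eq_prod_vadd {E F : Type*} [AddGroup E] [AddGroup F] (x : E × F)
    (s : Set E) (t : Set F) : x +ᵥ s ×ˢ t = (x.1 +ᵥ s) ×ˢ (x.2 +ᵥ t) := by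
  ext ⟨p, q⟩
  simp only [mem_vadd_set_iff_neg_vadd_mem, mem_prod, vadd_eq_add, Prod.fst_add,
    Prod.snd_add, Prod.fst_neg, Prod.snd_neg]

lemma subset_iUnion_slice_of_prod_subset_iUnion {E F ι : Type*} [AddGroup E] [AddGroup F]
    [SMul ℝ E] [SMul ℝ F] {P : Set E} {Q : Set F} {lam : ι → ℝ} {x : ι → E × F}
    (hcov : P ×ˢ Q ⊆ ⋃ i, x i +ᵥ lam i • P ×ˢ Q) {y : F} (hy : y ∈ Q) :
    P ⊆ ⋃ i : {i // y ∈ (x i).2 +ᵥ lam i • Q}, (x i.1).1 +ᵥ lam i • P := by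
  intro p hp
  obtain ⟨i, hi⟩ := mem_iUnion.1 (hcov (mk_mem_prod hp hy))
  rw [smul_set_prod, Set.vadd_prod_eq_prod_vadd] at hi
  exact mem_iUnion.2 ⟨⟨i, hi.2⟩, hi.1⟩

lemma MeasureTheory.mul_measure_le_sum_mul_measure_of_le_sum_indicator {X ι : Type*}
    [MeasurableSpace X] [Fintype ι] (μ : Measure X) {Q : Set X} {S : ι → Set X}
    (hS : ∀ i, MeasurableSet (S i)) {c : ℝ≥0∞} {w : ι → ℝ≥0∞}
    (h : ∀ y ∈ Q, c ≤ ∑ i, (S i).indicator (fun _ => w i) y) :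
    c * μ Q ≤ ∑ i, w i * μ (S i) :=
  calc c * μ Q = ∫⁻ _ in Q, c ∂μ := (setLIntegral_const _ _).symm
    _ ≤ ∫⁻ y in Q, ∑ i, (S i).indicator (fun _ => w i) y ∂μ :=
      setLIntegral_mono (by fun_prop (disch := exact hS _)) h
    _ ≤ ∫⁻ y, ∑ i, (S i).indicator (fun _ => w i) y ∂μ := setLIntegral_le_lintegral _ _
    _ = ∑ i, w i * μ (S i) := by
      rw [lintegral_finsetSum _ fun i _ => measurable_const.indicator (hS i)]
      simp only [lintegral_indicator_const (hS _)]

lemma MeasureTheory.Measure.addHaar_vadd_smul {F : Type*} [NormedAddCommGroup F]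
    [NormedSpace ℝ F] [MeasurableSpace F] [BorelSpace F] [FiniteDimensional ℝ F]
    (μ : Measure F) [μ.IsAddHaarMeasure] (b : F) {r : ℝ} (hr : 0 ≤ r) (s : Set F) :
    μ (b +ᵥ r • s) = ENNReal.ofReal (r ^ finrank ℝ F) * μ s := by
  rw [measure_vadd, Measure.addHaar_smul, abs_of_nonneg (pow_nonneg hr _)]

section gCov

variable {E : Type*} [NormedAddCommGroup E] [NormedSpace ℝ E] {α : ℝ} {B : Set E}

lemma gCov_le_sum {ι : Type*} [Fintype ι] {lam : ι → ℝ} {x : ι → E}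
    (hlam : ∀ i, lam i ∈ Ioo 0 1) (hcov : B ⊆ ⋃ i, x i +ᵥ lam i • B) :
    gCov α B ≤ ∑ i, lam i ^ α := by
  let e := Fintype.equivFin ι
  refine csInf_le ⟨0, ?_⟩ ⟨_, lam ∘ e.symm, x ∘ e.symm, fun j => hlam _, ?_,
    (e.symm.sum_comp (fun i => lam i ^ α)).symm⟩
  · rintro _ ⟨k, l, -, hl, -, rfl⟩
    exact Finset.sum_nonneg fun i _ => Real.rpow_nonneg (hl i).1.le α
  · intro p hp
    obtain ⟨i, hi⟩ := mem_iUnion.1 (hcov hp)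
    exact mem_iUnion.2 ⟨e i, by simpa using hi⟩

lemma exists_homothet_cover (hBc : IsCompact B) (hBi : (interior B).Nonempty) :
    ∃ (k : ℕ) (lam : Fin k → ℝ) (x : Fin k → E),
      (∀ i, lam i ∈ Ioo 0 1) ∧ B ⊆ ⋃ i, x i +ᵥ lam i • B := by
  obtain ⟨c, hc⟩ := hBi
  -- the open half-size copy of `interior B` that places `c` at `p`
  let U : E → Set E := fun p => (p - (2⁻¹ : ℝ) • c) +ᵥ (2⁻¹ : ℝ) • interior B
  have hU : ∀ p ∈ B, p ∈ U p := fun p _ =>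
    ⟨(2⁻¹ : ℝ) • c, smul_mem_smul_set hc, by simp [vadd_eq_add]⟩
  obtain ⟨t, ht⟩ := hBc.elim_finite_subcover U
    (fun p => (isOpen_interior.smul₀ (by norm_num)).vadd _)
    (fun p hp => mem_iUnion.2 ⟨p, hU p hp⟩)
  refine ⟨t.card, fun _ => 2⁻¹, fun j => (t.equivFin.symm j : E) - (2⁻¹ : ℝ) • c,
    fun _ => ⟨by norm_num, by norm_num⟩, fun p hp => ?_⟩
  obtain ⟨q, hq, hpq⟩ := mem_iUnion₂.1 (ht hp)
  refine mem_iUnion.2 ⟨t.equivFin ⟨q, hq⟩, ?_⟩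
  simpa using vadd_set_mono (smul_set_mono interior_subset) hpq

lemma le_gCov (hBc : IsCompact B) (hBi : (interior B).Nonempty) {c : ℝ}
    (h : ∀ (k : ℕ) (lam : Fin k → ℝ) (x : Fin k → E), (∀ i, lam i ∈ Ioo 0 1) →
      B ⊆ ⋃ i, x i +ᵥ lam i • B → c ≤ ∑ i, lam i ^ α) :
    c ≤ gCov α B := by
  obtain ⟨k, lam, x, hlam, hcov⟩ := exists_homothet_cover hBc hBi
  refine le_csInf ⟨_, k, lam, x, hlam, hcov, rfl⟩ ?_
  rintro _ ⟨k, lam, x, hlam, hcov, rfl⟩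
  exact h k lam x hlam hcov

lemma gCov_le_sum_indicator_of_prod_cover {F ι : Type*} [NormedAddCommGroup F]
    [NormedSpace ℝ F] [Fintype ι] {P : Set E} {Q : Set F} {lam : ι → ℝ} {x : ι → E × F}
    (hlam : ∀ i, lam i ∈ Ioo 0 1) (hcov : P ×ˢ Q ⊆ ⋃ i, x i +ᵥ lam i • P ×ˢ Q) {y : F}
    (hy : y ∈ Q) :
    gCov α P ≤ ∑ i, ((x i).2 +ᵥ lam i • Q).indicator (fun _ => lam i ^ α) y := by
  classical
  have hslice := subset_iUnion_slice_of_prod_subset_iUnion hcov hy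
  refine (gCov_le_sum (fun i : {i // y ∈ (x i).2 +ᵥ lam i • Q} => hlam i.1) hslice).trans_eq ?_
  simp only [indicator_apply]
  rw [← Finset.sum_filter, ← Finset.sum_subtype_eq_sum_filter, Finset.subtype_univ]

end gCov

section Product

variable {E F : Type*} [NormedAddCommGroup E] [NormedSpace ℝ E] [NormedAddCommGroup F]
  [NormedSpace ℝ F] [MeasurableSpace F] [BorelSpace F] [FiniteDimensional ℝ F]

lemma gCov_le_sum_rpow_add_finrank_of_prod_cover (α : ℝ) (P : Set E) {Q : Set F}
    (hQc : IsCompact Q) (hQi : (interior Q).Nonempty) {ι : Type*} [Fintype ι]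
    {lam : ι → ℝ} {x : ι → E × F} (hlam : ∀ i, lam i ∈ Ioo 0 1)
    (hcov : P ×ˢ Q ⊆ ⋃ i, x i +ᵥ lam i • P ×ˢ Q) :
    gCov α P ≤ ∑ i, lam i ^ (α + finrank ℝ F) := by
  let μ : Measure F := Measure.addHaar
  let S i := (x i).2 +ᵥ lam i • Q
  have hS : ∀ i, MeasurableSet (S i) := fun i =>
    ((hQc.smul (lam i)).vadd _).isClosed.measurableSet
  have hpos : ∀ i, 0 ≤ lam i := fun i => (hlam i).1.le
  have hsum_nonneg : 0 ≤ ∑ i, lam i ^ (α + finrank ℝ F) :=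
    Finset.sum_nonneg fun i _ => Real.rpow_nonneg (hpos i) _
  have key : ENNReal.ofReal (gCov α P) * μ Q
      ≤ ENNReal.ofReal (∑ i, lam i ^ (α + finrank ℝ F)) * μ Q :=
    calc ENNReal.ofReal (gCov α P) * μ Q
        ≤ ∑ i, ENNReal.ofReal (lam i ^ α) * μ (S i) := by
          refine mul_measure_le_sum_mul_measure_of_le_sum_indicator μ hS fun y hy => ?_
          refine (ENNReal.ofReal_le_ofReal
            (gCov_le_sum_indicator_of_prod_cover hlam hcov hy)).trans_eq ?_
          rw [ENNReal.ofReal_sum_of_nonneg fun i _ =>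
            indicator_nonneg (fun _ _ => Real.rpow_nonneg (hpos i) _) _]
          exact Finset.sum_congr rfl fun i _ =>
            (congr_fun (indicator_comp_of_zero ENNReal.ofReal_zero) y).symm
      _ = ENNReal.ofReal (∑ i, lam i ^ (α + finrank ℝ F)) * μ Q := by
          rw [ENNReal.ofReal_sum_of_nonneg fun i _ => Real.rpow_nonneg (hpos i) _,
            Finset.sum_mul]
          refine Finset.sum_congr rfl fun i _ => ?_
          rw [Measure.addHaar_vadd_smul μ _ (hpos i), ← mul_assoc,
            ← ENNReal.ofReal_mul (Real.rpow_nonneg (hpos i) _), Real.rpow_add (hlam i).1,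
            Real.rpow_natCast]
  have hμQ₀ : μ Q ≠ 0 := (Measure.measure_pos_of_nonempty_interior μ hQi).ne'
  have hμQ : μ Q ≠ ⊤ := hQc.measure_lt_top.ne
  exact (ENNReal.ofReal_le_ofReal_iff hsum_nonneg).1
    ((ENNReal.mul_le_mul_iff_left hμQ₀ hμQ).1 key)

lemma gCov_le_gCov_prod (α : ℝ) {P : Set E} {Q : Set F} (hPc : IsCompact P)
    (hPi : (interior P).Nonempty) (hQc : IsCompact Q) (hQi : (interior Q).Nonempty) :
    gCov α P ≤ gCov (α + finrank ℝ F) (P ×ˢ Q) :=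
  le_gCov (hPc.prod hQc) (by rw [interior_prod_eq]; exact hPi.prod hQi)
    fun _ _ _ hlam hcov => gCov_le_sum_rpow_add_finrank_of_prod_cover α P hQc hQi hlam hcov

end Product

theorem gCov_prod_ge_general (d m : ℕ) (α : ℝ)
    (P : Set (EuclideanSpace ℝ (Fin d))) (hP : IsConvexBody P)
    (Q : Set (EuclideanSpace ℝ (Fin m))) (hQ : IsConvexBody Q) :
    gCov α P ≤ gCov (α + m) (P ×ˢ Q) := by
  simpa only [finrank_euclideanSpace_fin] using
    gCov_le_gCov_prod α hP.2.1 hP.2.2 hQ.2.1 hQ.2.2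

/-- For convex bodies `P ⊆ ℝ^d` and `Q ⊆ ℝ^m` and `0 ≤ α ≤ d`, one has
`g_{α+m}(P × Q) ≥ g_α(P)`. -/
theorem gCov_prod_ge (d m : ℕ) (α : ℝ) (hα : 0 ≤ α) (hαd : α ≤ d)
    (P : Set (EuclideanSpace ℝ (Fin d))) (hP : IsConvexBody P)
    (Q : Set (EuclideanSpace ℝ (Fin m))) (hQ : IsConvexBody Q) :
    gCov α P ≤ gCov (α + m) (P ×ˢ Q) :=
  gCov_prod_ge_general d m α P hP Q hQ
end

section
/- For every integer d ≥ 1 and every integer α with 0 ≤ α ≤ d, the covering quantity of the unit cube satisfies g_α([0,1]^d) = 2^{d−α}. -/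
open Set MeasureTheory Pointwise

/-- The unit cube `[0,1]^d` in `ℝ^d`. -/
def unitCube (d : ℕ) : Set (EuclideanSpace ℝ (Fin d)) :=
  {x | ∀ i, x i ∈ Set.Icc (0 : ℝ) 1}

/-!
The covering by the `2^d` half-size cubes at the points of `{0, 1/2}^d` gives
`g_α ≤ 2^d · 2^{-α} = 2^{d-α}`. Conversely, split the coordinates into `α` free and `d - α`
fixed ones. For each `η ∈ {0,1}^{d-α}` the `α`-dimensional face `[0,1]^α × {η}` is covered by
the cubes of the covering that meet it, so by volume the `λ_i^α` of those cubes sum to at least `1`.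
A cube of side `λ_i < 1` cannot reach both `0` and `1` in a coordinate, so it meets at most one
of these `2^{d-α}` faces.
-/

theorem gCov_eq_sum_of_forall_le {E ι : Type*} [NormedAddCommGroup E] [NormedSpace ℝ E] [Fintype ι]
    {α : ℝ} {B : Set E} (lam : ι → ℝ) (x : ι → E) (hlam : ∀ i, lam i ∈ Ioo (0 : ℝ) 1)
    (hcov : B ⊆ ⋃ i, x i +ᵥ lam i • B)
    (hle : ∀ (k : ℕ) (lam' : Fin k → ℝ) (x' : Fin k → E), (∀ i, lam' i ∈ Ioo (0 : ℝ) 1) →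
      B ⊆ ⋃ i, x' i +ᵥ lam' i • B → ∑ i, lam i ^ α ≤ ∑ i, lam' i ^ α) :
    gCov α B = ∑ i, lam i ^ α := by
  refine IsLeast.csInf_eq
    ⟨?_, fun s ⟨k, lam', x', hlam', hcov', hs⟩ => hs ▸ hle k lam' x' hlam' hcov'⟩
  let e := Fintype.equivFin ι
  refine ⟨_, lam ∘ e.symm, x ∘ e.symm, fun i => hlam _, ?_, (e.symm.sum_comp _).symm⟩
  convert hcov using 1
  exact e.symm.surjective.iUnion_comp fun i => x i +ᵥ lam i • B

section AxisCube

variable {ι ι' κ : Type*}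

def axisCube (a : ι → ℝ) (r : ℝ) : Set (ι → ℝ) :=
  univ.pi fun j => Icc (a j) (a j + r)

theorem volume_axisCube [Fintype ι] (a : ι → ℝ) {r : ℝ} (hr : 0 ≤ r) :
    volume (axisCube a r) = ENNReal.ofReal (r ^ Fintype.card ι) := by
  rw [axisCube, volume_pi_pi]
  simp [Real.volume_Icc, ENNReal.ofReal_pow hr]

theorem one_le_sum_pow_of_axisCube_subset [Fintype ι] {s : Finset κ} {a : κ → ι → ℝ}
    {r : κ → ℝ} (hr : ∀ k, 0 ≤ r k) (h : axisCube 0 1 ⊆ ⋃ k ∈ s, axisCube (a k) (r k)) :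
    1 ≤ ∑ k ∈ s, r k ^ Fintype.card ι := by
  have hvol : ENNReal.ofReal 1 ≤ ENNReal.ofReal (∑ k ∈ s, r k ^ Fintype.card ι) := calc
    ENNReal.ofReal 1 = volume (axisCube (0 : ι → ℝ) 1) := by
      rw [volume_axisCube 0 zero_le_one, one_pow]
    _ ≤ ∑ k ∈ s, volume (axisCube (a k) (r k)) :=
      (measure_mono h).trans (measure_biUnion_finset_le _ _)
    _ = ENNReal.ofReal (∑ k ∈ s, r k ^ Fintype.card ι) := by
      rw [ENNReal.ofReal_sum_of_nonneg fun k _ => pow_nonneg (hr k) _]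
      exact Finset.sum_congr rfl fun k _ => volume_axisCube _ (hr k)
  exact (ENNReal.ofReal_le_ofReal_iff (Finset.sum_nonneg fun k _ => pow_nonneg (hr k) _)).mp hvol

theorem sumElim_mem_axisCube {a : ι ⊕ ι' → ℝ} {r : ℝ} {z : ι → ℝ} {w : ι' → ℝ} :
    Sum.elim z w ∈ axisCube a r ↔
      z ∈ axisCube (a ∘ Sum.inl) r ∧ w ∈ axisCube (a ∘ Sum.inr) r := by
  simp only [axisCube, mem_univ_pi, Sum.forall, Sum.elim_inl, Sum.elim_inr, Function.comp_apply]

theorem mem_axisCube_comp_equiv (e : ι' ≃ ι) {a : ι → ℝ} {r : ℝ} {y : ι' → ℝ} :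
    y ∈ axisCube (a ∘ e) r ↔ y ∘ e.symm ∈ axisCube a r := by
  simp only [axisCube, mem_univ_pi, Function.comp_apply, e.forall_congr_left, e.apply_symm_apply]

def cubeVertex (η : ι → Bool) : ι → ℝ := fun j => if η j then 1 else 0

theorem cubeVertex_mem_axisCube_zero_one (η : ι → Bool) : cubeVertex η ∈ axisCube 0 1 := by
  intro j _
  by_cases h : η j <;> simp [cubeVertex, h]

theorem eq_of_cubeVertex_mem_axisCube {c : ι → ℝ} {r : ℝ} (hr : r < 1) {η η' : ι → Bool}
    (h : cubeVertex η ∈ axisCube c r) (h' : cubeVertex η' ∈ axisCube c r) : η = η' := by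
  funext j
  have hj := h j (mem_univ j)
  have hj' := h' j (mem_univ j)
  cases hb : η j <;> cases hb' : η' j <;>
    simp only [cubeVertex, hb, hb', mem_Icc, Bool.false_eq_true, if_true, if_false] at hj hj' <;>
    first | rfl | (exfalso; linarith)

theorem two_pow_card_le_sum_pow_of_axisCube_subset [Fintype ι] [Fintype ι'] [Fintype κ]
    {a : κ → ι ⊕ ι' → ℝ} {r : κ → ℝ} (hr : ∀ k, r k ∈ Ioo 0 1)
    (h : axisCube 0 1 ⊆ ⋃ k, axisCube (a k) (r k)) :
    2 ^ Fintype.card ι' ≤ ∑ k, r k ^ Fintype.card ι := by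
  classical
  let faceCubes (η : ι' → Bool) : Finset κ :=
    {k | cubeVertex η ∈ axisCube (a k ∘ Sum.inr) (r k)}
  have hface (η : ι' → Bool) : 1 ≤ ∑ k ∈ faceCubes η, r k ^ Fintype.card ι := by
    refine one_le_sum_pow_of_axisCube_subset (a := fun k => a k ∘ Sum.inl)
      (fun k => (hr k).1.le) fun z hz => ?_
    obtain ⟨k, hk⟩ := mem_iUnion.mp
      (h (sumElim_mem_axisCube.mpr ⟨hz, cubeVertex_mem_axisCube_zero_one η⟩))
    rw [sumElim_mem_axisCube] at hk
    exact mem_biUnion (Finset.mem_filter.mpr ⟨Finset.mem_univ k, hk.2⟩) hk.1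
  have hdisj : (↑(Finset.univ : Finset (ι' → Bool)) : Set (ι' → Bool)).PairwiseDisjoint faceCubes :=
    fun η _ η' _ hne => Finset.disjoint_left.mpr fun k hk hk' =>
      hne (eq_of_cubeVertex_mem_axisCube (hr k).2 (Finset.mem_filter.mp hk).2
        (Finset.mem_filter.mp hk').2)
  calc (2 : ℝ) ^ Fintype.card ι' = ∑ _η : ι' → Bool, 1 := by simp
    _ ≤ ∑ η, ∑ k ∈ faceCubes η, r k ^ Fintype.card ι := Finset.sum_le_sum fun η _ => hface η
    _ = ∑ k ∈ Finset.univ.biUnion faceCubes, r k ^ Fintype.card ι := (Finset.sum_biUnion hdisj).symm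
    _ ≤ ∑ k, r k ^ Fintype.card ι := Finset.sum_le_sum_of_subset_of_nonneg
      (Finset.subset_univ _) fun k _ _ => pow_nonneg (hr k).1.le _

theorem two_pow_sub_le_sum_pow_of_axisCube_subset [Fintype ι] [Fintype κ]
    {a : κ → ι → ℝ} {r : κ → ℝ} (hr : ∀ k, r k ∈ Ioo 0 1)
    (h : axisCube 0 1 ⊆ ⋃ k, axisCube (a k) (r k)) {α : ℕ} (hα : α ≤ Fintype.card ι) :
    2 ^ (Fintype.card ι - α) ≤ ∑ k, r k ^ α := by
  let e : Fin α ⊕ Fin (Fintype.card ι - α) ≃ ι :=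
    finSumFinEquiv.trans ((finCongr (by omega)).trans (Fintype.equivFin ι).symm)
  have key := two_pow_card_le_sum_pow_of_axisCube_subset (a := fun k => a k ∘ e) hr fun y hy => by
    obtain ⟨k, hk⟩ := mem_iUnion.mp (h ((mem_axisCube_comp_equiv e).mp hy))
    exact mem_iUnion.mpr ⟨k, (mem_axisCube_comp_equiv e).mpr hk⟩
  simpa using key

end AxisCube

theorem unitCube_eq_preimage_axisCube (d : ℕ) :
    unitCube d = WithLp.ofLp ⁻¹' axisCube 0 1 := by
  ext y
  simp only [unitCube, axisCube, mem_ofPred_eq, mem_preimage, mem_univ_pi, Pi.zero_apply, zero_add]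

theorem vadd_smul_unitCube {d : ℕ} (x : EuclideanSpace ℝ (Fin d)) {r : ℝ} (hr : 0 < r) :
    x +ᵥ r • unitCube d = WithLp.ofLp ⁻¹' axisCube (WithLp.ofLp x) r := by
  ext y
  rw [mem_vadd_set_iff_neg_vadd_mem, mem_smul_set_iff_inv_smul_mem₀ hr.ne']
  simp only [unitCube, axisCube, mem_ofPred_eq, mem_preimage, mem_univ_pi, mem_Icc, PiLp.smul_apply,
    vadd_eq_add, PiLp.add_apply, PiLp.neg_apply, smul_eq_mul]
  refine forall_congr' fun j => ?_
  rw [mul_nonneg_iff_of_pos_left (inv_pos.mpr hr), inv_mul_le_iff₀ hr]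
  constructor <;> rintro ⟨h1, h2⟩ <;> constructor <;> linarith

theorem unitCube_subset_iUnion_iff {d : ℕ} {ι : Type*} {lam : ι → ℝ}
    (x : ι → EuclideanSpace ℝ (Fin d)) (hlam : ∀ i, 0 < lam i) :
    unitCube d ⊆ ⋃ i, x i +ᵥ lam i • unitCube d ↔
      axisCube 0 1 ⊆ ⋃ i, axisCube (WithLp.ofLp (x i)) (lam i) := by
  simp only [vadd_smul_unitCube _ (hlam _)]
  rw [unitCube_eq_preimage_axisCube, ← preimage_iUnion,
    (WithLp.ofLp_surjective 2).preimage_subset_preimage_iff]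

theorem unitCube_subset_iUnion_halfCubes (d : ℕ) :
    unitCube d ⊆ ⋃ b : Fin d → Bool,
      WithLp.toLp 2 ((2⁻¹ : ℝ) • cubeVertex b) +ᵥ (2⁻¹ : ℝ) • unitCube d := by
  rw [unitCube_subset_iUnion_iff _ fun _ => by norm_num]
  intro y hy
  refine mem_iUnion.mpr ⟨fun j => decide (2⁻¹ < y j), fun j _ => ?_⟩
  obtain ⟨h0, h1⟩ := hy j (mem_univ j)
  simp only [cubeVertex, Pi.smul_apply, smul_eq_mul, decide_eq_true_eq, mem_Icc,
    Pi.zero_apply, zero_add] at h0 h1 ⊢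
  split_ifs <;> constructor <;> linarith

theorem gCov_unitCube_general (d : ℕ) (α : ℕ) (hα : α ≤ d) :
    gCov (α : ℝ) (unitCube d) = 2 ^ (d - α) := by
  have hhalf : ∑ _b : Fin d → Bool, (2⁻¹ : ℝ) ^ (α : ℝ) = 2 ^ (d - α) := by
    rw [Finset.sum_const, Finset.card_univ, Fintype.card_fun, Fintype.card_bool, Fintype.card_fin,
      nsmul_eq_mul, Real.rpow_natCast, inv_pow, Nat.cast_pow, Nat.cast_ofNat,
      pow_sub₀ (2 : ℝ) two_ne_zero hα]
  rw [← hhalf]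
  refine gCov_eq_sum_of_forall_le _ _ (fun _ => by norm_num) (unitCube_subset_iUnion_halfCubes d)
    fun k lam x hlam hcov => ?_
  rw [hhalf]
  simp_rw [Real.rpow_natCast]
  simpa using two_pow_sub_le_sum_pow_of_axisCube_subset hlam
    ((unitCube_subset_iUnion_iff x fun i => (hlam i).1).mp hcov) (α := α) (by simpa using hα)

/-- For every `d ≥ 1` and every integer `0 ≤ α ≤ d`, `g_α([0,1]^d) = 2^{d-α}`. -/
theorem gCov_unitCube (d : ℕ) (hd : 1 ≤ d) (α : ℕ) (hα : α ≤ d) :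
    gCov (α : ℝ) (unitCube d) = 2 ^ (d - α) :=
  gCov_unitCube_general d α hα
end

section
/- For every integer d ≥ 8 and every integer α with 2 ≤ α ≤ d − 2, the illumination quantity of the unit cube satisfies h_α([0,1]^d) > 2^{d−α}. -/
/-!
A point in the relative interior of a face of `[0,1]^d` with fixed coordinate set `S` can only be
illuminated by a direction whose signs on `S` point into the cube. These faces have Hausdorff
dimension `d - #S`, so the sign vectors in `(ZMod 2)^d` of an admissible family of `k` directions
take every pattern on every `m = d - α` coordinates. If `k ≤ 2^m` each such restriction is a
bijection; then on every `m + 1` coordinates the words form half of the cube containing no two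
adjacent points, that is, one parity class. Comparing the parities on `R ∪ {j₁}` and `R ∪ {j₂}`
shows that `c j₁ - c j₂` is the same for all words `c`, which fails for two words that agree
on an `m`-set containing `j₁, j₂` except at `j₁`. The minimum defining `hIll` exists because the
directions from the vertices towards the centre illuminate every boundary point.
-/

open Set MeasureTheory Pointwise

/-- `hIll α B` is the minimal number of nonzero directions illuminating all boundary points
of `B` except for a set of Hausdorff dimension less than `α` (the empty exceptional set is
always allowed, its dimension being `-∞` by convention). -/
noncomputable def hIll {E : Type*} [NormedAddCommGroup E] [NormedSpace ℝ E]
    (α : ℝ) (B : Set E) : ℕ :=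
  sInf {k : ℕ | ∃ v : Fin k → E, (∀ i, v i ≠ 0) ∧
    ({x ∈ frontier B | ∀ i, ¬ Illuminates B (v i) x} = ∅ ∨
      dimH {x ∈ frontier B | ∀ i, ¬ Illuminates B (v i) x} < ENNReal.ofReal α)}

open scoped ENNReal

theorem ZMod.two_eq_zero_or_eq_one (a : ZMod 2) : a = 0 ∨ a = 1 := by
  revert a; decide

theorem ZMod.two_eq_add_one_of_ne {a b : ZMod 2} (h : a ≠ b) : a = b + 1 := by
  revert a b; decide

theorem eq_zero_of_forall_add_single {ι β : Type*} [Fintype ι] [DecidableEq ι]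
    (H : (ι → ZMod 2) → β) (hH : ∀ q j, H (q + Pi.single j 1) = H q) (q : ι → ZMod 2) :
    H q = H 0 := by
  suffices ∀ q', H (q' + q) = H q' by simpa using this 0
  rw [← Finset.univ_sum_single q]
  refine Finset.sum_induction _ (fun x => ∀ q', H (q' + x) = H q') (fun a b ha hb q' => ?_)
    (by simp) fun j _ q' => ?_
  · rw [← add_assoc, hb, ha]
  · rcases (q j).two_eq_zero_or_eq_one with h | h <;> simp [h, hH]

def ShattersAllOfCard {ι κ : Type*} (c : κ → ι → ZMod 2) (m : ℕ) : Prop :=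
  ∀ S : Finset ι, S.card = m → ∀ q : ι → ZMod 2, ∃ i, ∀ j ∈ S, c i j = q j

namespace ShattersAllOfCard

variable {ι κ : Type*} [Fintype ι] [DecidableEq ι] [Fintype κ] {c : κ → ι → ZMod 2} {m : ℕ}

omit [Fintype ι] in
theorem eq_of_eqOn (hc : ShattersAllOfCard c m) (hκ : Fintype.card κ ≤ 2 ^ m)
    {S : Finset ι} (hS : S.card = m) {i i' : κ} (h : ∀ j ∈ S, c i j = c i' j) : i = i' := by
  let restrict : κ → S → ZMod 2 := fun i j => c i j
  have hsurj : restrict.Surjective := fun q => by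
    obtain ⟨i, hi⟩ := hc S hS fun j => if hj : j ∈ S then q ⟨j, hj⟩ else 0
    exact ⟨i, funext fun j => by simp [restrict, hi j j.2]⟩
  have hcard : Fintype.card κ = Fintype.card (S → ZMod 2) :=
    le_antisymm (by simpa [hS] using hκ) (Fintype.card_le_of_surjective _ hsurj)
  exact ((Fintype.bijective_iff_surjective_and_card _).mpr ⟨hsurj, hcard⟩).1
    (funext fun j => h j j.2)

omit [Fintype ι] in
theorem realizes_add_single_iff (hc : ShattersAllOfCard c m) (hκ : Fintype.card κ ≤ 2 ^ m)
    {T : Finset ι} (hT : T.card = m + 1) {j : ι} (hj : j ∈ T) (q : ι → ZMod 2) :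
    (∃ i, ∀ l ∈ T, c i l = (q + Pi.single j 1 : ι → ZMod 2) l) ↔ ¬ ∃ i, ∀ l ∈ T, c i l = q l := by
  have hS : (T.erase j).card = m := by simp [Finset.card_erase_of_mem hj, hT]
  constructor
  · rintro ⟨i', hi'⟩ ⟨i, hi⟩
    have : i = i' := hc.eq_of_eqOn hκ hS fun l hl => by
      rw [hi l (Finset.mem_of_mem_erase hl), hi' l (Finset.mem_of_mem_erase hl),
        Pi.add_apply, Pi.single_eq_of_ne (Finset.ne_of_mem_erase hl), add_zero]
    subst this
    have := (hi j hj).symm.trans (hi' j hj)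
    simp at this
  · intro hno
    obtain ⟨i, hi⟩ := hc _ hS q
    refine ⟨i, fun l hl => ?_⟩
    rcases eq_or_ne l j with rfl | hlj
    · have hne : c i l ≠ q l := fun h => hno ⟨i, fun l' hl' => by
        rcases eq_or_ne l' l with rfl | hl'l
        · exact h
        · exact hi l' (Finset.mem_erase.mpr ⟨hl'l, hl'⟩)⟩
      simpa using ZMod.two_eq_add_one_of_ne hne
    · simpa [Pi.single_eq_of_ne hlj] using hi l (Finset.mem_erase.mpr ⟨hlj, hl⟩)

theorem sum_eq_sum (hc : ShattersAllOfCard c m) (hκ : Fintype.card κ ≤ 2 ^ m)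
    {T : Finset ι} (hT : T.card = m + 1) (i i' : κ) :
    ∑ j ∈ T, c i j = ∑ j ∈ T, c i' j := by
  classical
  let realizes (q : ι → ZMod 2) : Prop := ∃ i, ∀ l ∈ T, c i l = q l
  let H (q : ι → ZMod 2) : ZMod 2 := ∑ l ∈ T, q l + if realizes q then 1 else 0
  -- flipping a coordinate in `T` changes both the parity and whether the pattern is realised
  have hflip : ∀ q j, H (q + Pi.single j 1) = H q := by
    intro q j
    by_cases hj : j ∈ T
    · simp only [H, realizes, hc.realizes_add_single_iff hκ hT hj q]
      simp only [Pi.add_apply, Finset.sum_add_distrib, Finset.sum_pi_single', if_pos hj]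
      split_ifs <;> ring_nf
      reduce_mod_char
    · have hT : ∀ l ∈ T, (q + Pi.single j 1 : ι → ZMod 2) l = q l := fun l hl => by
        simp [Pi.single_eq_of_ne (ne_of_mem_of_not_mem hl hj)]
      have hreal : realizes (q + Pi.single j 1) ↔ realizes q :=
        exists_congr fun i => forall₂_congr fun l hl => by rw [hT l hl]
      simp only [H, hreal, Finset.sum_congr rfl hT]
  have h := (eq_zero_of_forall_add_single H hflip (c i)).trans
    (eq_zero_of_forall_add_single H hflip (c i')).symm
  have realizes_word : ∀ i, realizes (c i) := fun i => ⟨i, fun _ _ => rfl⟩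
  simpa [H, realizes_word] using h

theorem sub_eq_sub (hc : ShattersAllOfCard c m) (hκ : Fintype.card κ ≤ 2 ^ m)
    (hι : m + 2 ≤ Fintype.card ι) {j₁ j₂ : ι} (hne : j₁ ≠ j₂) (i i' : κ) :
    c i j₁ - c i j₂ = c i' j₁ - c i' j₂ := by
  obtain ⟨R, hR, hRcard⟩ : ∃ R ⊆ Finset.univ \ {j₁, j₂}, R.card = m :=
    Finset.exists_subset_card_eq (by rw [Finset.card_univ_sdiff, Finset.card_pair hne]; omega)
  have h₁ : j₁ ∉ R := fun h => (Finset.mem_sdiff.mp (hR h)).2 (by simp)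
  have h₂ : j₂ ∉ R := fun h => (Finset.mem_sdiff.mp (hR h)).2 (by simp)
  have e₁ := hc.sum_eq_sum hκ (T := insert j₁ R)
    (by rw [Finset.card_insert_of_notMem h₁, hRcard]) i i'
  have e₂ := hc.sum_eq_sum hκ (T := insert j₂ R)
    (by rw [Finset.card_insert_of_notMem h₂, hRcard]) i i'
  rw [Finset.sum_insert h₁, Finset.sum_insert h₁] at e₁
  rw [Finset.sum_insert h₂, Finset.sum_insert h₂] at e₂
  linear_combination e₁ - e₂

end ShattersAllOfCard

/-- The Bush bound for binary orthogonal arrays of strength `m` and index one. -/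
theorem ShattersAllOfCard.two_pow_lt_card {ι κ : Type*} [Fintype ι] [DecidableEq ι] [Fintype κ]
    {c : κ → ι → ZMod 2} {m : ℕ} (hc : ShattersAllOfCard c m) (hm : 2 ≤ m)
    (hι : m + 2 ≤ Fintype.card ι) : 2 ^ m < Fintype.card κ := by
  by_contra! hκ
  obtain ⟨j₁, j₂, hne⟩ := Fintype.exists_pair_of_one_lt_card (by omega : 1 < Fintype.card ι)
  obtain ⟨S, hS, -, hScard⟩ := Finset.exists_subsuperset_card_eq (n := m)
    (Finset.subset_univ {j₁, j₂}) (by rw [Finset.card_pair hne]; omega) (by simp; omega)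
  obtain ⟨i₀, hi₀⟩ := hc S hScard 0
  obtain ⟨i₁, hi₁⟩ := hc S hScard (Pi.single j₁ 1)
  have h := hc.sub_eq_sub hκ hι hne i₀ i₁
  rw [hi₀ j₁ (hS (by simp)), hi₀ j₂ (hS (by simp)), hi₁ j₁ (hS (by simp)),
    hi₁ j₂ (hS (by simp)), Pi.single_eq_same, Pi.single_eq_of_ne hne.symm] at h
  exact absurd h (by simp)

def unilluminated {E : Type*} [NormedAddCommGroup E] [NormedSpace ℝ E] (B : Set E) {k : ℕ}
    (v : Fin k → E) : Set E :=
  {x ∈ frontier B | ∀ i, ¬ Illuminates B (v i) x}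

section UnitCube

variable {d : ℕ}

theorem unitCube_eq_preimage :
    unitCube d = PiLp.homeomorph 2 (fun _ : Fin d => ℝ) ⁻¹' univ.pi fun _ => Icc 0 1 := by
  ext x
  exact ⟨fun h i _ => h i, fun h i => h i trivial⟩

theorem isClosed_unitCube : IsClosed (unitCube d) := by
  rw [unitCube_eq_preimage]
  exact (isClosed_set_pi fun _ _ => isClosed_Icc).preimage (PiLp.homeomorph 2 _).continuous

theorem interior_unitCube : interior (unitCube d) = {x | ∀ i, x i ∈ Ioo (0 : ℝ) 1} := by
  rw [unitCube_eq_preimage, ← Homeomorph.preimage_interior, interior_pi_set finite_univ]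
  ext x
  simp only [mem_preimage, mem_pi, mem_univ, interior_Icc, forall_const]
  rfl

theorem frontier_unitCube : frontier (unitCube d) = unitCube d \ interior (unitCube d) := by
  rw [frontier, isClosed_unitCube.closure_eq]

noncomputable def signPattern (v : EuclideanSpace ℝ (Fin d)) : Fin d → ZMod 2 :=
  fun j => if v j < 0 then 1 else 0

def openFace (S : Finset (Fin d)) (q : Fin d → ZMod 2) : Set (EuclideanSpace ℝ (Fin d)) :=
  {x | (∀ j ∈ S, x j = (q j).val) ∧ ∀ j ∉ S, x j ∈ Ioo (0 : ℝ) 1}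

theorem signPattern_eq_of_illuminates {S : Finset (Fin d)} {q : Fin d → ZMod 2}
    {x v : EuclideanSpace ℝ (Fin d)} (hx : x ∈ openFace S q)
    (hv : Illuminates (unitCube d) v x) {j : Fin d} (hj : j ∈ S) : signPattern v j = q j := by
  obtain ⟨t, ht, hxt⟩ := hv
  rw [interior_unitCube] at hxt
  have hxtj : x j + t * v j ∈ Ioo 0 1 := hxt j
  rw [hx.1 j hj] at hxtj
  rcases (q j).two_eq_zero_or_eq_one with hq | hq <;>
    simp only [hq, ZMod.val_zero, ZMod.val_one, Nat.cast_zero, Nat.cast_one] at hxtj ⊢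
  · have : 0 < v j := pos_of_mul_pos_right (by simpa using hxtj.1) ht.le
    simp [signPattern, this.not_gt]
  · have : v j < 0 := neg_of_mul_neg_right (by simpa using hxtj.2) ht.le
    simp [signPattern, this]

theorem openFace_subset_frontier {S : Finset (Fin d)} (hS : S.Nonempty) (q : Fin d → ZMod 2) :
    openFace S q ⊆ frontier (unitCube d) := by
  rintro x ⟨hfix, hfree⟩
  rw [frontier_unitCube, interior_unitCube]
  refine ⟨fun j => ?_, fun hint => ?_⟩
  · by_cases hj : j ∈ S
    · rw [hfix j hj]
      rcases (q j).two_eq_zero_or_eq_one with hq | hq <;> simp [hq, ZMod.val_one]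
    · exact Ioo_subset_Icc_self (hfree j hj)
  · obtain ⟨j, hj⟩ := hS
    have := hint j
    rw [hfix j hj] at this
    rcases (q j).two_eq_zero_or_eq_one with hq | hq <;> simp [hq, ZMod.val_one] at this

theorem openFace_nonempty (S : Finset (Fin d)) (q : Fin d → ZMod 2) :
    (openFace S q).Nonempty :=
  ⟨WithLp.toLp 2 fun j => if j ∈ S then ((q j).val : ℝ) else 1 / 2,
    fun j hj => by simp [hj], fun j hj => by norm_num [hj]⟩

theorem le_dimH_openFace (S : Finset (Fin d)) (q : Fin d → ZMod 2) :
    ((d - S.card : ℕ) : ℝ≥0∞) ≤ dimH (openFace S q) := by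
  let proj : EuclideanSpace ℝ (Fin d) →L[ℝ] ({j // j ∉ S} → ℝ) :=
    ContinuousLinearMap.pi fun j => EuclideanSpace.proj j.1
  have hbox : univ.pi (fun _ => Ioo (0 : ℝ) 1) ⊆ proj '' openFace S q := fun y hy =>
    ⟨WithLp.toLp 2 fun j => if hj : j ∈ S then ((q j).val : ℝ) else y ⟨j, hj⟩,
      ⟨fun j hj => by simp [hj], fun j hj => by simpa [hj] using hy ⟨j, hj⟩ trivial⟩,
      funext fun j => by simp [proj, j.2]⟩
  have hopen : IsOpen (univ.pi fun _ : {j // j ∉ S} => Ioo (0 : ℝ) 1) :=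
    isOpen_set_pi finite_univ fun _ _ => isOpen_Ioo
  calc ((d - S.card : ℕ) : ℝ≥0∞)
      = dimH (univ.pi fun _ : {j // j ∉ S} => Ioo (0 : ℝ) 1) := by
        rw [Real.dimH_of_mem_nhds (hopen.mem_nhds (x := fun _ => 1 / 2) fun _ _ => by norm_num)]
        simp
    _ ≤ dimH (proj '' openFace S q) := dimH_mono hbox
    _ ≤ dimH (openFace S q) := proj.lipschitz.dimH_image_le _

def cornerDirection (b : Fin d → Bool) : EuclideanSpace ℝ (Fin d) :=
  WithLp.toLp 2 fun j => if b j then -1 else 1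

theorem cornerDirection_ne_zero (hd : 0 < d) (b : Fin d → Bool) : cornerDirection b ≠ 0 := by
  intro h
  have := congrArg (· ⟨0, hd⟩) h
  by_cases hb : b ⟨0, hd⟩ <;> simp [cornerDirection, hb] at this

theorem illuminates_cornerDirection {x : EuclideanSpace ℝ (Fin d)} (hx : x ∈ unitCube d) :
    Illuminates (unitCube d) (cornerDirection fun j => decide (1 / 2 ≤ x j)) x := by
  refine ⟨1 / 4, by norm_num, ?_⟩
  rw [interior_unitCube]
  intro j
  obtain ⟨h0, h1⟩ := hx j
  by_cases hj : 1 / 2 ≤ x j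
  · norm_num [cornerDirection, hj]
    constructor <;> linarith
  · norm_num [cornerDirection, hj]
    constructor <;> linarith

theorem exists_unilluminated_unitCube_eq_empty (hd : 0 < d) :
    ∃ k, ∃ v : Fin k → EuclideanSpace ℝ (Fin d), (∀ i, v i ≠ 0) ∧
      unilluminated (unitCube d) v = ∅ :=
  ⟨_, cornerDirection ∘ (Fintype.equivFin (Fin d → Bool)).symm,
    fun _ => cornerDirection_ne_zero hd _,
    eq_empty_of_forall_notMem fun x ⟨hx, hdark⟩ =>
      hdark (Fintype.equivFin _ fun j => decide (1 / 2 ≤ x j))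
        (by simpa using illuminates_cornerDirection (isClosed_unitCube.frontier_subset hx))⟩

theorem two_pow_lt_of_unilluminated {α k : ℕ} (hα : 2 ≤ α) (hαd : α ≤ d - 2)
    (v : Fin k → EuclideanSpace ℝ (Fin d))
    (hv : unilluminated (unitCube d) v = ∅ ∨
      dimH (unilluminated (unitCube d) v) < ENNReal.ofReal α) :
    2 ^ (d - α) < k := by
  have hc : ShattersAllOfCard (fun i => signPattern (v i)) (d - α) := by
    intro S hS q
    by_contra! hq
    have hsub : openFace S q ⊆ unilluminated (unitCube d) v := fun x hx =>
      ⟨openFace_subset_frontier (Finset.card_pos.mp (by omega)) q hx, fun i hi =>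
        let ⟨_, hj, hne⟩ := hq i
        hne (signPattern_eq_of_illuminates hx hi hj)⟩
    rcases hv with hv | hv
    · exact (openFace_nonempty S q).ne_empty (subset_empty_iff.mp (hv ▸ hsub))
    · have := (le_dimH_openFace S q).trans (dimH_mono hsub)
      rw [hS, show d - (d - α) = α by omega, ← ENNReal.ofReal_natCast] at this
      exact this.not_gt hv
  simpa using hc.two_pow_lt_card (by omega) (by simp; omega)

end UnitCube

theorem hIll_unitCube_gt_general (d : ℕ) (α : ℕ) (hα2 : 2 ≤ α) (hαd : α ≤ d - 2) :
    2 ^ (d - α) < hIll (α : ℝ) (unitCube d) := by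
  obtain ⟨k, v, hv0, hv⟩ := exists_unilluminated_unitCube_eq_empty (d := d) (by omega)
  exact Nat.lt_iff_add_one_le.mpr <| le_csInf ⟨k, v, hv0, Or.inl hv⟩
    fun _ ⟨w, _, hw⟩ => two_pow_lt_of_unilluminated hα2 hαd w hw

/-- For every `d ≥ 8` and every integer `2 ≤ α ≤ d - 2`, `h_α([0,1]^d) > 2^{d-α}`. -/
theorem hIll_unitCube_gt (d : ℕ) (hd : 8 ≤ d) (α : ℕ) (hα2 : 2 ≤ α) (hαd : α ≤ d - 2) :
    2 ^ (d - α) < hIll (α : ℝ) (unitCube d) :=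
  hIll_unitCube_gt_general d α hα2 hαd
end

section
/- Let d and α be integers with 0 ≤ α ≤ d, and let S ⊆ {0,1}^d be a set of vertices of the cube with |S| ≤ 2^{d−α} such that S meets every α-dimensional face of the cube; that is, for every subset I ⊆ {1,…,d} with |I| = d − α and every assignment ε : I → {0,1} there exists s ∈ S with s_i = ε(i) for all i ∈ I. Then |S| = 2^{d−α} and any two distinct elements of S have Hamming distance at least α + 1. -/
/-!
Fix a set `I` of `d - α` coordinates. Meeting every face that fixes the coordinates in `I` says
that restriction to `I` maps `S` onto `{0,1}^I`, so `|S| ≥ 2^{d-α}`; with `|S| ≤ 2^{d-α}` the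
restriction is a bijection, so distinct points of `S` differ somewhere in `I`. Two points at
Hamming distance at most `α` agree on at least `d - α` coordinates, which contain such an `I`.
-/

namespace Finset

variable {ι β : Type*} [DecidableEq ι] [Fintype β]

lemma surjOn_restrict_of_forall_exists_eqOn [Nonempty β] {S : Finset (ι → β)} {I : Finset ι}
    (hmeet : ∀ ε : ι → β, ∃ s ∈ S, ∀ i ∈ I, s i = ε i) :
    Set.SurjOn I.restrict (S : Set (ι → β)) (univ : Finset (I → β)) := by
  intro g _
  obtain ⟨s, hs, hsg⟩ :=
    hmeet fun i => if h : i ∈ I then g ⟨i, h⟩ else Classical.arbitrary β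
  exact ⟨s, hs, funext fun i => by simp [restrict, hsg i i.2]⟩

lemma card_pow_le_card_of_forall_exists_eqOn [Nonempty β] {S : Finset (ι → β)} {I : Finset ι}
    (hmeet : ∀ ε : ι → β, ∃ s ∈ S, ∀ i ∈ I, s i = ε i) :
    Fintype.card β ^ #I ≤ #S := by
  simpa using card_le_card_of_surjOn _ (surjOn_restrict_of_forall_exists_eqOn hmeet)

lemma eq_of_forall_exists_eqOn_of_card_le [Nonempty β] {S : Finset (ι → β)} {I : Finset ι}
    (hmeet : ∀ ε : ι → β, ∃ s ∈ S, ∀ i ∈ I, s i = ε i) (hcard : #S ≤ Fintype.card β ^ #I)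
    {s t : ι → β} (hs : s ∈ S) (ht : t ∈ S) (hst : ∀ i ∈ I, s i = t i) : s = t :=
  injOn_of_surjOn_of_card_le _ (fun _ _ => mem_coe.2 (mem_univ _))
    (surjOn_restrict_of_forall_exists_eqOn hmeet) (by simpa using hcard) hs ht
    (funext fun i : I => hst i i.2)

end Finset

open Finset in
lemma exists_card_eq_forall_eq_of_hammingDist_le {ι β : Type*} [Fintype ι] [DecidableEq β]
    {s t : ι → β} {k : ℕ} (h : hammingDist s t + k ≤ Fintype.card ι) :
    ∃ I : Finset ι, #I = k ∧ ∀ i ∈ I, s i = t i := by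
  classical
  obtain ⟨I, hI, hIcard⟩ := exists_subset_card_eq (s := ({i | s i ≠ t i} : Finset ι)ᶜ) (n := k)
    (by rw [card_compl]; exact Nat.le_sub_of_add_le' h)
  exact ⟨I, hIcard, fun i hi => by simpa using hI hi⟩

/-- If `S ⊆ {0,1}^d` has at most `2^{d-α}` elements and meets every `α`-dimensional face of
the cube (for every set `I` of `d - α` coordinates and every assignment `ε` on `I` there is
`s ∈ S` agreeing with `ε` on `I`), then `|S| = 2^{d-α}` and any two distinct elements of `S`
have Hamming distance at least `α + 1`. -/
theorem cube_code (d α : ℕ) (hα : α ≤ d) (S : Finset (Fin d → Bool))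
    (hcard : S.card ≤ 2 ^ (d - α))
    (hmeet : ∀ I : Finset (Fin d), I.card = d - α → ∀ ε : Fin d → Bool,
      ∃ s ∈ S, ∀ i ∈ I, s i = ε i) :
    S.card = 2 ^ (d - α) ∧
      ∀ s ∈ S, ∀ t ∈ S, s ≠ t → α + 1 ≤ hammingDist s t := by
  obtain ⟨I₀, -, hI₀⟩ := Finset.exists_subset_card_eq (s := (Finset.univ : Finset (Fin d)))
    (n := d - α) (by simp)
  have hlower := Finset.card_pow_le_card_of_forall_exists_eqOn (hmeet I₀ hI₀)
  rw [Fintype.card_bool, hI₀] at hlower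
  refine ⟨le_antisymm hcard hlower, fun s hs t ht hst => ?_⟩
  by_contra! hclose
  obtain ⟨I, hI, hsI⟩ := exists_card_eq_forall_eq_of_hammingDist_le (s := s) (t := t)
    (k := d - α) (by rw [Fintype.card_fin]; omega)
  exact hst <| Finset.eq_of_forall_exists_eqOn_of_card_le (hmeet I hI)
    (by simpa [hI] using hcard) hs ht hsI
end

section
/- For all integers d and α with d ≥ 8 and 2 ≤ α ≤ d − 2, one has ∑_{i=0}^{⌊α/2⌋} C(d, i) > 2^α, where C(d, i) is the binomial coefficient. -/
/-!
Since `C(d, i)` is monotone in `d`, it suffices to take `d = α + 2` (or `d = 8` for small `α`).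
For `α = 2m` the row `2m + 1` already gives `∑_{i ≤ m} C(2m+1, i) = 4^m`, and any larger row
is strictly bigger. For `α = 2m + 1` the row `2m + 3` gives
`∑_{i ≤ m} C(2m+3, i) = 4^(m+1) - C(2m+4, m+2) / 2`, so it remains to bound the central binomial
coefficient by `4 C(2n, n) < 4^n` for `n ≥ 5`; this follows by induction from
`C(2n+2, n+1) < 4 C(2n, n)`.
-/

open Finset

namespace Nat

theorem centralBinom_succ_lt_four_mul (n : ℕ) : centralBinom (n + 1) < 4 * centralBinom n := by
  have h := succ_mul_centralBinom_succ n
  have hpos := centralBinom_pos n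
  nlinarith

theorem mul_centralBinom_lt_four_pow_of_le {c n₀ n : ℕ} (hn : n₀ ≤ n)
    (h₀ : c * centralBinom n₀ < 4 ^ n₀) : c * centralBinom n < 4 ^ n := by
  induction n, hn using Nat.le_induction with
  | base => exact h₀
  | succ n _ ih =>
    calc c * centralBinom (n + 1) ≤ 4 * (c * centralBinom n) := by
          rw [mul_left_comm]; gcongr; exact (centralBinom_succ_lt_four_mul n).le
      _ < 4 * 4 ^ n := by gcongr
      _ = 4 ^ (n + 1) := by ring

theorem four_mul_centralBinom_lt_four_pow {n : ℕ} (hn : 5 ≤ n) : 4 * centralBinom n < 4 ^ n :=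
  mul_centralBinom_lt_four_pow_of_le hn (by decide)

theorem centralBinom_succ_eq_two_mul_choose (n : ℕ) :
    centralBinom (n + 1) = 2 * (2 * n + 1).choose n := by
  rw [centralBinom_eq_two_mul_choose, show 2 * (n + 1) = 2 * n + 1 + 1 by ring,
    choose_succ_succ', choose_symm_half, ← two_mul]

theorem sum_range_choose_le_sum_range_choose {n d : ℕ} (r : ℕ) (h : n ≤ d) :
    ∑ i ∈ range r, n.choose i ≤ ∑ i ∈ range r, d.choose i :=
  sum_le_sum fun i _ => choose_le_choose i h

theorem sum_range_choose_lt_sum_range_choose {n d r : ℕ} (hr : 2 ≤ r) (h : n < d) :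
    ∑ i ∈ range r, n.choose i < ∑ i ∈ range r, d.choose i :=
  sum_lt_sum (fun i _ => choose_le_choose i h.le)
    ⟨1, mem_range.2 hr, by simpa only [choose_one_right] using h⟩

theorem two_pow_lt_sum_range_choose_of_even {m d : ℕ} (hm : 1 ≤ m) (hd : 2 * m + 1 < d) :
    2 ^ (2 * m) < ∑ i ∈ range (m + 1), d.choose i := by
  calc 2 ^ (2 * m) = ∑ i ∈ range (m + 1), (2 * m + 1).choose i := by
        rw [sum_range_choose_halfway, pow_mul]; rfl
    _ < ∑ i ∈ range (m + 1), d.choose i := sum_range_choose_lt_sum_range_choose (by omega) hd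

theorem two_pow_lt_sum_range_choose_of_odd {m : ℕ} (hm : 3 ≤ m) :
    2 ^ (2 * m + 1) < ∑ i ∈ range (m + 1), (2 * m + 3).choose i := by
  have halfway := sum_range_choose_halfway (m + 1)
  rw [sum_range_succ, show 2 * (m + 1) + 1 = 2 * m + 3 by ring] at halfway
  have hcentral := four_mul_centralBinom_lt_four_pow (show 5 ≤ m + 2 by omega)
  rw [centralBinom_succ_eq_two_mul_choose, show 2 * (m + 1) + 1 = 2 * m + 3 by ring] at hcentral
  have hpow : 4 ^ (m + 1) = 2 * 2 ^ (2 * m + 1) := by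
    rw [show (4 : ℕ) = 2 ^ 2 from rfl, ← pow_mul]; ring
  rw [show 4 ^ (m + 2) = 4 * 4 ^ (m + 1) by ring] at hcentral
  omega

end Nat

/-- For integers `d ≥ 8` and `2 ≤ α ≤ d - 2`, `∑_{i=0}^{⌊α/2⌋} C(d, i) > 2^α`. -/
theorem binom_sum_gt (d α : ℕ) (hd : 8 ≤ d) (hα2 : 2 ≤ α) (hαd : α ≤ d - 2) :
    2 ^ α < ∑ i ∈ Finset.range (α / 2 + 1), Nat.choose d i := by
  obtain ⟨m, rfl | rfl⟩ := Nat.even_or_odd' α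
  · rw [Nat.mul_div_cancel_left m two_pos]
    exact Nat.two_pow_lt_sum_range_choose_of_even (by omega) (by omega)
  · rw [show (2 * m + 1) / 2 = m by omega]
    obtain hm | hm := Nat.lt_or_ge m 3
    · have hm1 : 1 ≤ m := by omega
      have hsmall : 2 ^ (2 * m + 1) < ∑ i ∈ range (m + 1), Nat.choose 8 i := by
        interval_cases m <;> decide
      exact hsmall.trans_le (Nat.sum_range_choose_le_sum_range_choose _ hd)
    · exact (Nat.two_pow_lt_sum_range_choose_of_odd hm).trans_le
        (Nat.sum_range_choose_le_sum_range_choose _ (by omega))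
end
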